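/- Fix n ≥ 2 and 2 ≤ k ≤ n, and let B_n^k be the S_n-invariant connected building set on [n] consisting of all singletons and all subsets of cardinality at least k. Then any two B_n^k-trees are isomorphic as unlabeled rooted trees, and every B_n^k-tree is isomorphic as a poset to the ordinal sum A_{k−1} ⊕ C_{n−k+1}, where A_{k−1} is an antichain on k−1 elements, C_{n−k+1} is a totally ordered chain on n−k+1 elements, and in the ordinal sum every element of A_{k−1} lies below every element of C_{n−k+1}. -/
import Mathlib


open scoped Classical

noncomputable section

/-- A rooted tree on the vertex set `S ⊆ ℕ`, encoded by its root and its parent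
function; edges are directed away from the root (so each non-root vertex `i`
carries the edge `(i, parent i)`, with `parent i` closer to the root).  The
parent function is normalized to be the identity outside `S` and at the root. -/
structure RTree (S : Finset ℕ) where
  root : ℕ
  root_mem : root ∈ S
  parent : ℕ → ℕ
  parent_out : ∀ i, i ∉ S → parent i = i
  parent_root : parent root = root
  parent_mem : ∀ i ∈ S, parent i ∈ S
  reach : ∀ i ∈ S, ∃ k, parent^[k] i = root

namespace RTree

variable {S : Finset ℕ}

/-- The set `T_{≤ i}` of descendants of `i` in `T` (including `i` itself). -/
def desc (T : RTree S) (i : ℕ) : Finset ℕ :=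
  S.filter fun j => ∃ k, T.parent^[k] j = i

/-- The depth of a vertex: its distance to the root. -/
def dp (T : RTree S) (x : ℕ) : ℕ :=
  sInf {k | T.parent^[k] x = T.root}

/-- The depth of the tree: the maximal depth of a vertex. -/
def depth (T : RTree S) : ℕ := S.sup T.dp

/-- The set of descent edges `(i, parent i)` with `i > parent i`, recorded by
the child endpoint `i`. -/
def desSet (T : RTree S) : Finset ℕ :=
  S.filter fun i => i ≠ T.root ∧ T.parent i < i

/-- The number of descents of `T`. -/
def des (T : RTree S) : ℕ := T.desSet.card

/-- The major index of `T`: the sum, over all descent edges `(i,j)` of `T`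
(with `j = parent i`), of `depth T - dp j`, i.e. of the minimal rank of `j`. -/
def maj (T : RTree S) : ℕ :=
  ∑ i ∈ T.desSet, (T.depth - T.dp (T.parent i))

/-- The statistic `μ(T)`: the sum, over all edges `(i,j)` of `T`
(with `j = parent i`), of `depth T - dp j`. -/
def mu (T : RTree S) : ℕ :=
  ∑ i ∈ S.filter (fun i => i ≠ T.root), (T.depth - T.dp (T.parent i))

end RTree

/-- `B` is a building set on the finite ground set `S`. -/
def IsBuildingSet (S : Finset ℕ) (B : Finset (Finset ℕ)) : Prop :=
  (∀ I ∈ B, I ⊆ S ∧ I.Nonempty) ∧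
  (∀ I ∈ B, ∀ J ∈ B, (I ∩ J).Nonempty → I ∪ J ∈ B) ∧
  (∀ i ∈ S, ({i} : Finset ℕ) ∈ B)

/-- `B` is a connected building set on `S`. -/
def IsConnBuildingSet (S : Finset ℕ) (B : Finset (Finset ℕ)) : Prop :=
  IsBuildingSet S B ∧ S ∈ B

/-- `T` is a `B`-tree: all descendant sets belong to `B`, and no union of
descendant sets of `k ≥ 2` pairwise incomparable nodes belongs to `B`. -/
def IsBTree (S : Finset ℕ) (B : Finset (Finset ℕ)) (T : RTree S) : Prop :=
  (∀ i ∈ S, T.desc i ∈ B) ∧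
  ∀ I : Finset ℕ, I ⊆ S → 2 ≤ I.card →
    (∀ i ∈ I, ∀ j ∈ I, i ≠ j → i ∉ T.desc j ∧ j ∉ T.desc i) →
    I.biUnion T.desc ∉ B

/-- The tree (equivalently, poset) order on a rooted tree: `x ≤_T y` iff `y`
lies on the path from `x` to the root. -/
def RTree.le {S : Finset ℕ} (T : RTree S) (x y : ℕ) : Prop :=
  ∃ m, T.parent^[m] x = y

namespace RTree

variable {S : Finset ℕ} (T : RTree S)

lemma le_refl' (x : ℕ) : T.le x x := ⟨0, rfl⟩

lemma le_trans' {x y z : ℕ} (h1 : T.le x y) (h2 : T.le y z) : T.le x z := by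
  obtain ⟨a, ha⟩ := h1; obtain ⟨b, hb⟩ := h2
  exact ⟨b + a, by rw [Function.iterate_add_apply, ha, hb]⟩

lemma mem_desc {x y : ℕ} : x ∈ T.desc y ↔ x ∈ S ∧ T.le x y := by
  simp [RTree.desc, RTree.le, Finset.mem_filter]

lemma self_mem_desc {x : ℕ} (hx : x ∈ S) : x ∈ T.desc x :=
  T.mem_desc.mpr ⟨hx, T.le_refl' x⟩

lemma desc_subset (y : ℕ) : T.desc y ⊆ S := Finset.filter_subset _ _

lemma eq_root_of_periodic {x m : ℕ} (hx : x ∈ S) (hm : 0 < m)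
    (h : T.parent^[m] x = x) : x = T.root := by
  obtain ⟨r, hr⟩ := T.reach x hx
  have key : ∀ t, T.parent^[m * t] x = x := by
    intro t
    induction t with
    | zero => simp
    | succ t ih =>
        rw [Nat.mul_succ, Function.iterate_add_apply, h, ih]
  have h1 := key r
  have h2 : m * r = (m * r - r) + r := by
    have : r ≤ m * r := Nat.le_mul_of_pos_left r hm
    omega
  rw [h2, Function.iterate_add_apply, hr, Function.iterate_fixed T.parent_root] at h1
  exact h1.symm

lemma le_antisymm' {x y : ℕ} (hx : x ∈ S) (h1 : T.le x y) (h2 : T.le y x) :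
    x = y := by
  obtain ⟨a, ha⟩ := h1; obtain ⟨b, hb⟩ := h2
  rcases Nat.eq_zero_or_pos a with h | h
  · subst h; simpa using ha
  · have hper : T.parent^[b + a] x = x := by
      rw [Function.iterate_add_apply, ha, hb]
    have hxr := T.eq_root_of_periodic hx (by omega) hper
    subst hxr
    rw [Function.iterate_fixed T.parent_root] at ha
    exact ha

lemma le_root' {x : ℕ} (hx : x ∈ S) : T.le x T.root := T.reach x hx

lemma desc_root : T.desc T.root = S := by
  apply Finset.Subset.antisymm (T.desc_subset _)
  intro x hx
  exact T.mem_desc.mpr ⟨hx, T.le_root' hx⟩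

lemma desc_mono {y z : ℕ} (h : T.le y z) : T.desc y ⊆ T.desc z := by
  intro x hx
  obtain ⟨hxS, hle⟩ := T.mem_desc.mp hx
  exact T.mem_desc.mpr ⟨hxS, T.le_trans' hle h⟩

lemma le_parent (x : ℕ) : T.le x (T.parent x) := ⟨1, rfl⟩

lemma parent_ne {x : ℕ} (hx : x ∈ S) (hr : x ≠ T.root) : T.parent x ≠ x := by
  intro h
  obtain ⟨m, hm⟩ := T.reach x hx
  rw [Function.iterate_fixed h] at hm
  exact hr hm

lemma le_parent_of_le_ne {x y : ℕ} (h : T.le x y) (hne : x ≠ y) :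
    T.le (T.parent x) y := by
  obtain ⟨m, hm⟩ := h
  match m, hm with
  | 0, hm => exact absurd hm hne
  | m + 1, hm => exact ⟨m, by rw [← Function.iterate_succ_apply]; exact hm⟩

lemma card_desc_lt_parent {x : ℕ} (hx : x ∈ S) (hr : x ≠ T.root) :
    (T.desc x).card < (T.desc (T.parent x)).card := by
  have hsub := T.desc_mono (T.le_parent x)
  have hmem : T.parent x ∈ T.desc (T.parent x) := T.self_mem_desc (T.parent_mem x hx)
  have hnot : T.parent x ∉ T.desc x := by
    intro h
    have h1 : T.le (T.parent x) x := (T.mem_desc.mp h).2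
    have := T.le_antisymm' (T.parent_mem x hx) h1 (T.le_parent x)
    exact T.parent_ne hx hr this
  exact Finset.card_lt_card ((Finset.ssubset_iff_of_subset hsub).mpr ⟨_, hmem, hnot⟩)

lemma desc_eq_singleton {x : ℕ} (hx : x ∈ S) (h : (T.desc x).card = 1) :
    T.desc x = {x} := by
  obtain ⟨a, ha⟩ := Finset.card_eq_one.mp h
  have := T.self_mem_desc hx
  rw [ha, Finset.mem_singleton] at this
  rw [ha, this]

end RTree

lemma memB_iff (n k : ℕ) (B : Finset (Finset ℕ))
    (hB : B = (Finset.Icc 1 n).image (fun i => ({i} : Finset ℕ)) ∪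
        ((Finset.Icc 1 n).powerset.filter fun I => k ≤ I.card)) (I : Finset ℕ) :
    I ∈ B ↔ I ⊆ Finset.Icc 1 n ∧ (I.card = 1 ∨ k ≤ I.card) := by
  subst hB
  simp only [Finset.mem_union, Finset.mem_image, Finset.mem_filter,
    Finset.mem_powerset]
  constructor
  · rintro (⟨i, hi, rfl⟩ | ⟨h1, h2⟩)
    · exact ⟨Finset.singleton_subset_iff.mpr hi, Or.inl (Finset.card_singleton i)⟩
    · exact ⟨h1, Or.inr h2⟩
  · rintro ⟨h1, h2 | h2⟩
    · obtain ⟨a, rfl⟩ := Finset.card_eq_one.mp h2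
      exact Or.inl ⟨a, h1 (Finset.mem_singleton_self a), rfl⟩
    · exact Or.inr ⟨h1, h2⟩
lemma key_structure (n k : ℕ) (hn : 2 ≤ n) (hk2 : 2 ≤ k) (hkn : k ≤ n)
    (B : Finset (Finset ℕ))
    (hB : B = (Finset.Icc 1 n).image (fun i => ({i} : Finset ℕ)) ∪
        ((Finset.Icc 1 n).powerset.filter fun I => k ≤ I.card))
    (T : RTree (Finset.Icc 1 n)) (hT : IsBTree (Finset.Icc 1 n) B T) :
    ∃ c : ℕ → ℕ,
      (∀ i, i ≤ n - k → c i ∈ Finset.Icc 1 n ∧ (T.desc (c i)).card = n - i) ∧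
      c 0 = T.root ∧
      (∀ i, i < n - k → T.parent (c (i + 1)) = c i) ∧
      (∀ x ∈ Finset.Icc 1 n, (T.desc x).card = 1 → T.parent x = c (n - k)) ∧
      (((Finset.Icc 1 n).filter fun x => (T.desc x).card = 1).card = k - 1) ∧
      (∀ x ∈ Finset.Icc 1 n, (T.desc x).card = 1 ∨ ∃ i, i ≤ n - k ∧ x = c i) := by
  have hScard : (Finset.Icc 1 n).card = n := by rw [Nat.card_Icc]; omega
  obtain ⟨hT1, hT2⟩ := hT
  have hmemB := memB_iff n k B hB
  have D1 : ∀ v ∈ (Finset.Icc 1 n), (T.desc v).card = 1 ∨ k ≤ (T.desc v).card :=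
    fun v hv => ((hmemB _).mp (hT1 v hv)).2
  have descS : ∀ v, T.desc v ⊆ (Finset.Icc 1 n) := T.desc_subset
  have cardle : ∀ v, (T.desc v).card ≤ n := fun v => by
    exact le_of_le_of_eq (Finset.card_le_card (descS v)) hScard
  -- comparability when union is large
  have D2 : ∀ u ∈ (Finset.Icc 1 n), ∀ v ∈ (Finset.Icc 1 n), u ≠ v → k ≤ (T.desc u ∪ T.desc v).card →
      u ∈ T.desc v ∨ v ∈ T.desc u := by
    intro u hu v hv hne hcard
    by_contra hcon
    push_neg at hcon
    obtain ⟨h1, h2⟩ := hcon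
    refine hT2 {u, v} ?_ ?_ ?_ ?_
    · intro x hx
      rcases Finset.mem_insert.mp hx with rfl | hx
      · exact hu
      · rw [Finset.mem_singleton] at hx; subst hx; exact hv
    · rw [Finset.card_insert_of_notMem (by simpa using hne), Finset.card_singleton]
    · intro i hi j hj hij
      simp only [Finset.mem_insert, Finset.mem_singleton] at hi hj
      rcases hi with rfl | rfl <;> rcases hj with rfl | rfl
      · exact absurd rfl hij
      · exact ⟨h1, h2⟩
      · exact ⟨h2, h1⟩
      · exact absurd rfl hij
    · have hbu : ({u, v} : Finset ℕ).biUnion T.desc = T.desc u ∪ T.desc v := by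
        ext x
        simp [Finset.mem_biUnion, Finset.mem_union]
      rw [hbu]
      exact (hmemB _).mpr ⟨Finset.union_subset (descS u) (descS v), Or.inr hcard⟩
  -- comparability with a non-leaf
  have comp : ∀ u ∈ (Finset.Icc 1 n), ∀ v ∈ (Finset.Icc 1 n), (T.desc v).card ≠ 1 →
      u ∈ T.desc v ∨ v ∈ T.desc u := by
    intro u hu v hv hcv
    rcases eq_or_ne u v with rfl | hne
    · exact Or.inl (T.self_mem_desc hu)
    · refine D2 u hu v hv hne ?_
      have : k ≤ (T.desc v).card := (D1 v hv).resolve_left hcv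
      exact this.trans (Finset.card_le_card Finset.subset_union_right)
  -- the leaves
  set A := (Finset.Icc 1 n).filter (fun x => (T.desc x).card = 1) with hAdef
  have leafdesc : ∀ x ∈ A, T.desc x = {x} := by
    intro x hx
    obtain ⟨hxS, hx1⟩ := Finset.mem_filter.mp hx
    exact T.desc_eq_singleton hxS hx1
  have D4 : A.card ≤ k - 1 := by
    by_contra hcon
    have hA : k ≤ A.card := by omega
    refine hT2 A (Finset.filter_subset _ _) (by omega) ?_ ?_
    · intro i hi j hj hij
      constructor
      · intro hmem
        rw [leafdesc j hj, Finset.mem_singleton] at hmem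
        exact hij hmem
      · intro hmem
        rw [leafdesc i hi, Finset.mem_singleton] at hmem
        exact hij hmem.symm
    · have hbu : A.biUnion T.desc = A := by
        ext x
        simp only [Finset.mem_biUnion]
        constructor
        · rintro ⟨i, hi, hx⟩
          rw [leafdesc i hi, Finset.mem_singleton] at hx
          subst hx; exact hi
        · intro hx
          exact ⟨x, hx, T.self_mem_desc (Finset.mem_filter.mp hx).1⟩
      rw [hbu]
      exact (hmemB _).mpr ⟨Finset.filter_subset _ _, Or.inr hA⟩
  -- the non-leaves
  set NL := (Finset.Icc 1 n).filter (fun x => ¬ (T.desc x).card = 1) with hNLdef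
  have cardinj : ∀ u ∈ NL, ∀ v ∈ NL, (T.desc u).card = (T.desc v).card → u = v := by
    have main : ∀ u ∈ NL, ∀ v ∈ NL, (T.desc u).card = (T.desc v).card →
        u ∈ T.desc v → u = v := by
      intro u hu v hv hcard hmem
      obtain ⟨huS, _⟩ := Finset.mem_filter.mp hu
      have hle : T.le u v := (T.mem_desc.mp hmem).2
      have hsub := T.desc_mono hle
      have heq : T.desc u = T.desc v :=
        Finset.eq_of_subset_of_card_le hsub (le_of_eq hcard.symm)
      have hvm : v ∈ T.desc u := by
        rw [heq]; exact T.self_mem_desc (Finset.mem_filter.mp hv).1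
      exact T.le_antisymm' huS hle (T.mem_desc.mp hvm).2
    intro u hu v hv hcard
    obtain ⟨huS, hu1⟩ := Finset.mem_filter.mp hu
    obtain ⟨hvS, hv1⟩ := Finset.mem_filter.mp hv
    rcases comp u huS v hvS hv1 with h | h
    · exact main u hu v hv hcard h
    · exact (main v hv u hu hcard.symm h).symm
  have rootNL : T.root ∈ NL ∧ (T.desc T.root).card = n := by
    have hd : (T.desc T.root).card = n := by rw [T.desc_root, hScard]
    exact ⟨Finset.mem_filter.mpr ⟨T.root_mem, by omega⟩, hd⟩
  have cardmem : ∀ v ∈ NL, (T.desc v).card ∈ Finset.Icc k n := by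
    intro v hv
    obtain ⟨hvS, hv1⟩ := Finset.mem_filter.mp hv
    exact Finset.mem_Icc.mpr ⟨(D1 v hvS).resolve_left hv1, cardle v⟩
  have hpart : A.card + NL.card = n := by
    rw [hAdef, hNLdef, Finset.card_filter_add_card_filter_not, hScard]
  have hNLge : n - k + 1 ≤ NL.card := by omega
  have himg : NL.image (fun v => (T.desc v).card) = Finset.Icc k n := by
    apply Finset.eq_of_subset_of_card_le
    · intro m hm
      obtain ⟨v, hv, rfl⟩ := Finset.mem_image.mp hm
      exact cardmem v hv
    · rw [Finset.card_image_of_injOn cardinj, Nat.card_Icc]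
      omega
  have surj : ∀ m ∈ Finset.Icc k n, ∃ v ∈ NL, (T.desc v).card = m := by
    intro m hm
    rw [← himg] at hm
    exact Finset.mem_image.mp hm
  have hex : ∀ i, ∃ v, i ≤ n - k → (v ∈ NL ∧ (T.desc v).card = n - i) := by
    intro i
    by_cases h : i ≤ n - k
    · obtain ⟨v, hv, hvc⟩ := surj (n - i) (Finset.mem_Icc.mpr ⟨by omega, by omega⟩)
      exact ⟨v, fun _ => ⟨hv, hvc⟩⟩
    · exact ⟨0, fun h' => absurd h' h⟩
  choose c hc using hex
  have cuniq : ∀ i, i ≤ n - k → ∀ v ∈ NL, (T.desc v).card = n - i → v = c i := by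
    intro i hi v hv hvc
    exact cardinj v hv (c i) (hc i hi).1 (by rw [hvc, (hc i hi).2])
  have hNLcard : NL.card = n - k + 1 := by
    have := Finset.card_image_of_injOn cardinj
    rw [himg, Nat.card_Icc] at this
    omega
  have hAcard : A.card = k - 1 := by omega
  have hc0 : c 0 = T.root := by
    exact (cuniq 0 (Nat.zero_le _) T.root rootNL.1 (by rw [rootNL.2]; omega)).symm
  -- the chain of non-leaves
  have hchain : ∀ i, i < n - k → T.parent (c (i + 1)) = c i := by
    intro i hi
    have hi1 : i + 1 ≤ n - k := by omega
    obtain ⟨huNL, huc⟩ := hc (i + 1) hi1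
    obtain ⟨huS, hu1⟩ := Finset.mem_filter.mp huNL
    have hune : c (i + 1) ≠ T.root := by
      intro h
      rw [h, rootNL.2] at huc
      omega
    have hlt := T.card_desc_lt_parent huS hune
    have hpS : T.parent (c (i + 1)) ∈ (Finset.Icc 1 n) := T.parent_mem _ huS
    have hpNL : T.parent (c (i + 1)) ∈ NL := by
      refine Finset.mem_filter.mpr ⟨hpS, ?_⟩
      omega
    have hpcard : (T.desc (T.parent (c (i + 1)))).card = n - i := by
      by_contra hcon
      have hge : n - i + 1 ≤ (T.desc (T.parent (c (i + 1)))).card := by omega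
      obtain ⟨hvNL, hvc⟩ := hc i (by omega)
      obtain ⟨hvS, hv1⟩ := Finset.mem_filter.mp hvNL
      rcases comp (c (i + 1)) huS (c i) hvS hv1 with h | h
      · -- c (i+1) below c i: then parent (c (i+1)) also below c i, card too big
        have hle : T.le (c (i + 1)) (c i) := (T.mem_desc.mp h).2
        have hne : c (i + 1) ≠ c i := by
          intro h'
          rw [h'] at huc
          omega
        have hple := T.le_parent_of_le_ne hle hne
        have := Finset.card_le_card (T.desc_mono hple)
        omega
      · -- c i below c (i+1): card contradiction
        have := Finset.card_le_card (T.desc_mono (T.mem_desc.mp h).2)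
        omega
    exact cuniq i (by omega) _ hpNL hpcard
  -- parents of leaves
  have hleafpar : ∀ x ∈ (Finset.Icc 1 n), (T.desc x).card = 1 → T.parent x = c (n - k) := by
    intro x hxS hx1
    have hxA : x ∈ A := Finset.mem_filter.mpr ⟨hxS, hx1⟩
    have hxne : x ≠ T.root := by
      intro h
      rw [h, rootNL.2] at hx1
      omega
    have hlt := T.card_desc_lt_parent hxS hxne
    have hpS : T.parent x ∈ (Finset.Icc 1 n) := T.parent_mem _ hxS
    have hpNL : T.parent x ∈ NL := Finset.mem_filter.mpr ⟨hpS, by omega⟩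
    have hpk : k ≤ (T.desc (T.parent x)).card :=
      (Finset.mem_Icc.mp (cardmem _ hpNL)).1
    obtain ⟨hfNL, hfc⟩ := hc (n - k) le_rfl
    obtain ⟨hfS, hf1⟩ := Finset.mem_filter.mp hfNL
    have hfck : (T.desc (c (n - k))).card = k := by omega
    have hpcard : (T.desc (T.parent x)).card = k := by
      by_contra hcon
      have hxf : x ∈ T.desc (c (n - k)) := by
        rcases comp x hxS (c (n - k)) hfS hf1 with h | h
        · exact h
        · exfalso
          rw [leafdesc x hxA, Finset.mem_singleton] at h
          rw [h] at hfck
          omega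
      have hle : T.le x (c (n - k)) := (T.mem_desc.mp hxf).2
      have hne : x ≠ c (n - k) := by
        intro h'
        rw [← h'] at hfck
        omega
      have hple := T.le_parent_of_le_ne hle hne
      have := Finset.card_le_card (T.desc_mono hple)
      omega
    exact cuniq (n - k) le_rfl _ hpNL (by omega)
  -- coverage
  have hcover : ∀ x ∈ (Finset.Icc 1 n), (T.desc x).card = 1 ∨ ∃ i, i ≤ n - k ∧ x = c i := by
    intro x hxS
    by_cases hx1 : (T.desc x).card = 1
    · exact Or.inl hx1
    · have hxNL : x ∈ NL := Finset.mem_filter.mpr ⟨hxS, hx1⟩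
      have hk := Finset.mem_Icc.mp (cardmem x hxNL)
      refine Or.inr ⟨n - (T.desc x).card, by omega, ?_⟩
      exact cuniq _ (by omega) x hxNL (by omega)
  exact ⟨c, fun i hi => ⟨(Finset.mem_filter.mp (hc i hi).1).1, (hc i hi).2⟩,
    hc0, hchain, hleafpar, hAcard, hcover⟩
/-- For `2 ≤ k ≤ n`, any two `B_n^k`-trees are isomorphic as
unlabeled rooted trees, and every `B_n^k`-tree is isomorphic as a poset to the
ordinal sum `A_{k−1} ⊕ C_{n−k+1}` of an antichain on `k−1` elements and a chain
on `n−k+1` elements (every element of the antichain lying below every element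
of the chain). -/
theorem Bnk_trees_antichain_chain
    (n k : ℕ) (hn : 2 ≤ n) (hk2 : 2 ≤ k) (hkn : k ≤ n)
    (B : Finset (Finset ℕ))
    (hB : B = (Finset.Icc 1 n).image (fun i => ({i} : Finset ℕ)) ∪
        ((Finset.Icc 1 n).powerset.filter fun I => k ≤ I.card)) :
    -- any two `B_n^k`-trees are isomorphic as unlabeled rooted trees
    (∀ T₁ T₂ : RTree (Finset.Icc 1 n),
      IsBTree (Finset.Icc 1 n) B T₁ → IsBTree (Finset.Icc 1 n) B T₂ →
      ∃ e : ℕ → ℕ,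
        Set.BijOn e (Finset.Icc 1 n : Finset ℕ) (Finset.Icc 1 n : Finset ℕ) ∧
        e T₁.root = T₂.root ∧
        ∀ x ∈ Finset.Icc 1 n, x ≠ T₁.root →
          T₂.parent (e x) = e (T₁.parent x)) ∧
    -- every `B_n^k`-tree is, as a poset, the ordinal sum `A_{k-1} ⊕ C_{n-k+1}`
    ∀ T : RTree (Finset.Icc 1 n), IsBTree (Finset.Icc 1 n) B T →
      ∃ A : Finset ℕ, A ⊆ Finset.Icc 1 n ∧ A.card = k - 1 ∧
        (∀ x ∈ A, ∀ y ∈ A, x ≠ y → ¬ T.le x y ∧ ¬ T.le y x) ∧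
        (∀ x ∈ A, ∀ y ∈ Finset.Icc 1 n \ A, T.le x y) ∧
        (∀ x ∈ Finset.Icc 1 n \ A, ∀ y ∈ Finset.Icc 1 n \ A,
          T.le x y ∨ T.le y x) := by
  have hcl : ∀ (T : RTree (Finset.Icc 1 n)) (c : ℕ → ℕ),
      (∀ i, i < n - k → T.parent (c (i + 1)) = c i) →
      ∀ d j, j + d ≤ n - k → T.parent^[d] (c (j + d)) = c j := by
    intro T c hchain d
    induction d with
    | zero => intro j _; simp
    | succ d ih =>
        intro j hj
        rw [Function.iterate_succ_apply]
        have h1 : T.parent (c (j + (d + 1))) = c (j + d) := hchain (j + d) (by omega)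
        rw [h1]
        exact ih j (by omega)
  constructor
  · -- isomorphism of any two B-trees
    intro T₁ T₂ h1 h2
    obtain ⟨c₁, hc₁, hc01, hchain₁, hleaf₁, hA₁, hcov₁⟩ :=
      key_structure n k hn hk2 hkn B hB T₁ h1
    obtain ⟨c₂, hc₂, hc02, hchain₂, hleaf₂, hA₂, hcov₂⟩ :=
      key_structure n k hn hk2 hkn B hB T₂ h2
    set A₁ := (Finset.Icc 1 n).filter (fun x => (T₁.desc x).card = 1) with hA1def
    set A₂ := (Finset.Icc 1 n).filter (fun x => (T₂.desc x).card = 1) with hA2def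
    have hcards : A₁.card = A₂.card := by rw [hA₁, hA₂]
    set g := Finset.equivOfCardEq hcards with hgdef
    set e : ℕ → ℕ := fun x =>
      if hx : x ∈ A₁ then ((g ⟨x, hx⟩ : {a // a ∈ A₂}) : ℕ)
      else if x ∈ Finset.Icc 1 n then c₂ (n - (T₁.desc x).card) else x with hedef
    have heA : ∀ x (hx : x ∈ A₁), e x = ((g ⟨x, hx⟩ : {a // a ∈ A₂}) : ℕ) := by
      intro x hx
      rw [hedef]
      exact dif_pos hx
    have heA2 : ∀ x (hx : x ∈ A₁), e x ∈ A₂ := by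
      intro x hx
      rw [heA x hx]
      exact (g ⟨x, hx⟩).2
    have hnotleaf : ∀ i, i ≤ n - k → c₁ i ∉ A₁ := by
      intro i hi hmem
      have h1 := (Finset.mem_filter.mp hmem).2
      have h2 := (hc₁ i hi).2
      omega
    have hce : ∀ i, i ≤ n - k → e (c₁ i) = c₂ i := by
      intro i hi
      rw [hedef]
      simp only
      rw [dif_neg (hnotleaf i hi), if_pos (hc₁ i hi).1, (hc₁ i hi).2]
      congr 1
      omega
    -- description of e on non-leaves
    have hnl : ∀ x ∈ Finset.Icc 1 n, x ∉ A₁ → ∃ i, i ≤ n - k ∧ x = c₁ i := by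
      intro x hx hxA
      rcases hcov₁ x hx with h | h
      · refine absurd ?_ hxA
        rw [hA1def]
        exact Finset.mem_filter.mpr ⟨hx, h⟩
      · exact h
    refine ⟨e, ⟨?_, ?_, ?_⟩, ?_, ?_⟩
    · -- MapsTo
      intro x hx
      rw [Finset.mem_coe] at hx ⊢
      by_cases hxA : x ∈ A₁
      · exact Finset.filter_subset _ _ (heA2 x hxA)
      · obtain ⟨i, hi, rfl⟩ := hnl x hx hxA
        rw [hce i hi]
        exact (hc₂ i hi).1
    · -- InjOn
      intro x hx y hy hxy
      rw [Finset.mem_coe] at hx hy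
      by_cases hxA : x ∈ A₁ <;> by_cases hyA : y ∈ A₁
      · have hxy' : (g ⟨x, hxA⟩ : {a // a ∈ A₂}) = g ⟨y, hyA⟩ := by
          apply Subtype.ext
          rw [← heA x hxA, ← heA y hyA]
          exact hxy
        have := g.injective hxy'
        exact congrArg Subtype.val this
      · exfalso
        obtain ⟨j, hj, rfl⟩ := hnl y hy hyA
        have h1 : (T₂.desc (e x)).card = 1 := (Finset.mem_filter.mp (heA2 x hxA)).2
        rw [hxy, hce j hj] at h1
        have h2 := (hc₂ j hj).2
        omega
      · exfalso
        obtain ⟨j, hj, rfl⟩ := hnl x hx hxA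
        have h1 : (T₂.desc (e y)).card = 1 := (Finset.mem_filter.mp (heA2 y hyA)).2
        rw [← hxy, hce j hj] at h1
        have h2 := (hc₂ j hj).2
        omega
      · obtain ⟨i, hi, rfl⟩ := hnl x hx hxA
        obtain ⟨j, hj, rfl⟩ := hnl y hy hyA
        rw [hce i hi, hce j hj] at hxy
        have h1 := (hc₂ i hi).2
        have h2 := (hc₂ j hj).2
        rw [hxy] at h1
        have : i = j := by omega
        rw [this]
    · -- SurjOn
      intro y hy
      rw [Finset.mem_coe] at hy
      by_cases hyA : y ∈ A₂
      · refine ⟨((g.symm ⟨y, hyA⟩ : {a // a ∈ A₁}) : ℕ), ?_, ?_⟩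
        · rw [Finset.mem_coe]
          exact Finset.filter_subset _ _ (g.symm ⟨y, hyA⟩).2
        · rw [heA _ (g.symm ⟨y, hyA⟩).2]
          have : (⟨((g.symm ⟨y, hyA⟩ : {a // a ∈ A₁}) : ℕ), (g.symm ⟨y, hyA⟩).2⟩ :
              {a // a ∈ A₁}) = g.symm ⟨y, hyA⟩ := Subtype.ext rfl
          rw [this, Equiv.apply_symm_apply]
      · have h1 : (T₂.desc y).card ≠ 1 := by
          intro h
          refine hyA ?_
          rw [hA2def]
          exact Finset.mem_filter.mpr ⟨hy, h⟩
        rcases hcov₂ y hy with h | ⟨i, hi, rfl⟩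
        · exact absurd h h1
        · exact ⟨c₁ i, Finset.mem_coe.mpr (hc₁ i hi).1, hce i hi⟩
    · -- root to root
      rw [← hc01, hce 0 (Nat.zero_le _), hc02]
    · -- parents
      intro x hx hxr
      by_cases hxA : x ∈ A₁
      · have hx1 : (T₁.desc x).card = 1 := (Finset.mem_filter.mp hxA).2
        have hp1 : T₁.parent x = c₁ (n - k) := hleaf₁ x hx hx1
        have hex2 : e x ∈ A₂ := heA2 x hxA
        have hp2 : T₂.parent (e x) = c₂ (n - k) :=
          hleaf₂ (e x) (Finset.filter_subset _ _ hex2) (Finset.mem_filter.mp hex2).2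
        rw [hp1, hp2, hce (n - k) le_rfl]
      · obtain ⟨i, hi, rfl⟩ := hnl x hx hxA
        have hi0 : i ≠ 0 := by
          intro h
          rw [h, hc01] at hxr
          exact hxr rfl
        obtain ⟨j, rfl⟩ := Nat.exists_eq_succ_of_ne_zero hi0
        have hj : j < n - k := by omega
        rw [hchain₁ j hj, hce (j + 1) hi, hchain₂ j hj, hce j (by omega)]
  · -- the poset structure
    intro T hT
    obtain ⟨c, hc, hc0, hchain, hleaf, hAcard, hcov⟩ :=
      key_structure n k hn hk2 hkn B hB T hT
    refine ⟨(Finset.Icc 1 n).filter (fun x => (T.desc x).card = 1),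
      Finset.filter_subset _ _, hAcard, ?_, ?_, ?_⟩
    · -- antichain
      intro x hx y hy hne
      obtain ⟨hxS, hx1⟩ := Finset.mem_filter.mp hx
      obtain ⟨hyS, hy1⟩ := Finset.mem_filter.mp hy
      constructor
      · intro hle
        have : x ∈ T.desc y := T.mem_desc.mpr ⟨hxS, hle⟩
        rw [T.desc_eq_singleton hyS hy1, Finset.mem_singleton] at this
        exact hne this
      · intro hle
        have : y ∈ T.desc x := T.mem_desc.mpr ⟨hyS, hle⟩
        rw [T.desc_eq_singleton hxS hx1, Finset.mem_singleton] at this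
        exact hne this.symm
    · -- leaves below non-leaves
      intro x hx y hy
      obtain ⟨hxS, hx1⟩ := Finset.mem_filter.mp hx
      obtain ⟨hyS, hyA⟩ := Finset.mem_sdiff.mp hy
      have hy1 : (T.desc y).card ≠ 1 := fun h => hyA (Finset.mem_filter.mpr ⟨hyS, h⟩)
      rcases hcov y hyS with h | ⟨i, hi, rfl⟩
      · exact absurd h hy1
      · have hstep : T.le x (c (n - k)) :=
          ⟨1, by rw [Function.iterate_one]; exact hleaf x hxS hx1⟩
        refine T.le_trans' hstep ⟨n - k - i, ?_⟩
        have := hcl T c hchain (n - k - i) i (by omega)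
        rwa [show i + (n - k - i) = n - k by omega] at this
    · -- non-leaves form a chain
      intro x hx y hy
      obtain ⟨hxS, hxA⟩ := Finset.mem_sdiff.mp hx
      obtain ⟨hyS, hyA⟩ := Finset.mem_sdiff.mp hy
      have hx1 : (T.desc x).card ≠ 1 := fun h => hxA (Finset.mem_filter.mpr ⟨hxS, h⟩)
      have hy1 : (T.desc y).card ≠ 1 := fun h => hyA (Finset.mem_filter.mpr ⟨hyS, h⟩)
      rcases hcov x hxS with h | ⟨i, hi, rfl⟩
      · exact absurd h hx1
      rcases hcov y hyS with h | ⟨j, hj, rfl⟩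
      · exact absurd h hy1
      rcases Nat.le_total i j with h | h
      · refine Or.inr ⟨j - i, ?_⟩
        have := hcl T c hchain (j - i) i (by omega)
        rwa [show i + (j - i) = j by omega] at this
      · refine Or.inl ⟨i - j, ?_⟩
        have := hcl T c hchain (i - j) j (by omega)
        rwa [show j + (i - j) = i by omega] at this
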